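/- In the setting of the previous result, the two-step estimator θ̂ = θ̂_t (the average over the t counts not flagged as biased, where t is chosen as the smallest index with n_{(t+1)} > Nθ̂_t + λ) converges in probability to θ as N → ∞ on the event {1 ≤ t ≤ k}, whose probability tends to 1. -/

import Mathlib

open Real ProbabilityTheory Filter Finset

open scoped Classical

/-- The counts sorted in increasing order (0-indexed order statistics). -/
def sortedCounts {J : ℕ} (nv : Fin J → ℕ) : List ℕ :=
  (List.ofFn nv).insertionSort (· ≤ ·)

/-- The tuning parameter `λ = √(max_j n_j)`. -/
noncomputable def lamOf {J : ℕ} (nv : Fin J → ℕ) : ℝ :=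
  Real.sqrt ((Finset.univ.sup nv : ℕ) : ℝ)

/-- `θ̂_t`, the average of the `t` smallest counts divided by `N`. -/
noncomputable def thetaHat {J : ℕ} (N : ℕ) (nv : Fin J → ℕ) (t : ℕ) : ℝ :=
  (((sortedCounts nv).take t).sum : ℝ) / (t * N)

/-- `t`, the smallest index `1 ≤ t < J` with `n_(t+1) > N θ̂_t + λ`, or `0` if none exists. -/
noncomputable def tIndex (J N : ℕ) (nv : Fin J → ℕ) : ℕ :=
  sInf {t | 1 ≤ t ∧ t < J ∧
    (N : ℝ) * thetaHat N nv t + lamOf nv < (((sortedCounts nv).getD t 0 : ℕ) : ℝ)}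

open scoped NNReal Topology
open MeasureTheory

/-!
Call a configuration of counts good when every `n_j` lies within `αN` of its mean `Nμ_j`.
For large `N` we have `λ = √(max n_j) = O(√N) ≤ αN`, so on a good configuration the `k` unbiased
counts are below all the biased ones and are exactly the `k` smallest counts. Every `θ̂_t` with
`t ≤ k` is then an average of unbiased counts, hence within `α` of `θ`, and
`n_(k+1) > Nθ̂_k + λ`, so `1 ≤ t ≤ k`. By Chernoff bounds for each Poisson count and a union
bound, good configurations have probability tending to `1`.
-/

theorem List.insertionSort_append_of_forall_le {α : Type*} [LinearOrder α] {l₁ l₂ : List α}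
    (h : ∀ a ∈ l₁, ∀ b ∈ l₂, a ≤ b) :
    (l₁ ++ l₂).insertionSort (· ≤ ·) = l₁.insertionSort (· ≤ ·) ++ l₂.insertionSort (· ≤ ·) := by
  refine List.Perm.eq_of_sortedLE List.sortedLE_insertionSort ?_ ?_
  · refine List.Pairwise.sortedLE (List.pairwise_append.2 ⟨List.sortedLE_insertionSort.pairwise,
      List.sortedLE_insertionSort.pairwise, fun a ha b hb => h a ?_ b ?_⟩)
    · exact (List.perm_insertionSort _ _).subset ha
    · exact (List.perm_insertionSort _ _).subset hb
  · exact (List.perm_insertionSort _ _).trans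
      ((List.perm_insertionSort _ _).append (List.perm_insertionSort _ _)).symm

theorem List.mem_take_ofFn {α : Type*} {n k : ℕ} {f : Fin n → α} {a : α} :
    a ∈ (List.ofFn f).take k ↔ ∃ i : Fin n, (i : ℕ) < k ∧ f i = a := by
  simp only [List.mem_iff_getElem, List.getElem_take, List.getElem_ofFn, List.length_take,
    List.length_ofFn, lt_min_iff]
  constructor
  · rintro ⟨i, ⟨hik, hin⟩, rfl⟩; exact ⟨⟨i, hin⟩, hik, rfl⟩
  · rintro ⟨i, hik, rfl⟩; exact ⟨i, ⟨hik, i.2⟩, rfl⟩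

theorem List.mem_drop_ofFn {α : Type*} {n k : ℕ} {f : Fin n → α} {a : α} :
    a ∈ (List.ofFn f).drop k ↔ ∃ i : Fin n, k ≤ (i : ℕ) ∧ f i = a := by
  simp only [List.mem_iff_getElem, List.getElem_drop, List.getElem_ofFn, List.length_drop,
    List.length_ofFn]
  constructor
  · rintro ⟨i, hi, rfl⟩; exact ⟨⟨k + i, by omega⟩, by simp, rfl⟩
  · rintro ⟨i, hik, rfl⟩; exact ⟨i - k, by omega, by congr; omega⟩

section SortedCounts

variable {J k : ℕ} {nv : Fin J → ℕ}

theorem sortedCounts_eq_append (hsep : ∀ i j : Fin J, (i : ℕ) < k → k ≤ (j : ℕ) → nv i ≤ nv j) :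
    sortedCounts nv = ((List.ofFn nv).take k).insertionSort (· ≤ ·)
      ++ ((List.ofFn nv).drop k).insertionSort (· ≤ ·) := by
  rw [sortedCounts, ← List.insertionSort_append_of_forall_le, List.take_append_drop]
  intro a ha b hb
  obtain ⟨i, hi, rfl⟩ := List.mem_take_ofFn.1 ha
  obtain ⟨j, hj, rfl⟩ := List.mem_drop_ofFn.1 hb
  exact hsep i j hi hj

theorem exists_eq_of_mem_take_sortedCounts
    (hsep : ∀ i j : Fin J, (i : ℕ) < k → k ≤ (j : ℕ) → nv i ≤ nv j) (hkJ : k ≤ J) {t : ℕ}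
    (htk : t ≤ k) {x : ℕ} (hx : x ∈ (sortedCounts nv).take t) :
    ∃ i : Fin J, (i : ℕ) < k ∧ nv i = x := by
  rw [sortedCounts_eq_append hsep, List.take_append_of_le_length (by simpa [hkJ] using htk)] at hx
  exact List.mem_take_ofFn.1 ((List.perm_insertionSort _ _).subset (List.mem_of_mem_take hx))

theorem exists_eq_sortedCounts_getD
    (hsep : ∀ i j : Fin J, (i : ℕ) < k → k ≤ (j : ℕ) → nv i ≤ nv j) (hkJ : k < J) :
    ∃ i : Fin J, k ≤ (i : ℕ) ∧ nv i = (sortedCounts nv).getD k 0 := by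
  have hlen : (((List.ofFn nv).take k).insertionSort (· ≤ ·)).length = k := by
    simp [hkJ.le]
  have hpos : 0 < (((List.ofFn nv).drop k).insertionSort (· ≤ ·)).length := by
    simp [hkJ]
  rw [sortedCounts_eq_append hsep, List.getD_eq_getElem _ _ (by simp; omega),
    List.getElem_append_right (by omega)]
  exact List.mem_drop_ofFn.1 ((List.perm_insertionSort _ _).subset (List.getElem_mem _))

end SortedCounts

theorem List.abs_sum_sub_length_mul_le {l : List ℝ} {c d : ℝ} (h : ∀ x ∈ l, |x - c| ≤ d) :
    |l.sum - l.length * c| ≤ l.length * d := by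
  induction l with
  | nil => simp
  | cons x l ih =>
    simp only [List.forall_mem_cons] at h
    calc |(x :: l).sum - (x :: l).length * c| = |(x - c) + (l.sum - l.length * c)| := by
          simp only [List.sum_cons, List.length_cons]; push_cast; ring_nf
      _ ≤ |x - c| + |l.sum - l.length * c| := abs_add_le _ _
      _ ≤ d + l.length * d := add_le_add h.1 (ih h.2)
      _ = (x :: l).length * d := by simp only [List.length_cons]; push_cast; ring

theorem abs_thetaHat_sub_le {J N t : ℕ} {nv : Fin J → ℕ} {θ α : ℝ} (hN : 0 < N) (ht : 1 ≤ t)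
    (htJ : t ≤ J) (h : ∀ x ∈ (sortedCounts nv).take t, |(x : ℝ) - N * θ| ≤ α * N) :
    |thetaHat N nv t - θ| ≤ α := by
  have hlen : ((sortedCounts nv).take t).length = t := by simp [sortedCounts, htJ]
  have hsum := List.abs_sum_sub_length_mul_le (l := ((sortedCounts nv).take t).map (↑))
    (c := N * θ) (d := α * N) (by simpa only [List.forall_mem_map] using h)
  rw [List.length_map, hlen, ← Nat.cast_list_sum] at hsum
  have htN : (0 : ℝ) < t * N := by positivity
  rw [thetaHat, div_sub' htN.ne', abs_div, abs_of_pos htN, div_le_iff₀ htN]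
  calc _ = |(((sortedCounts nv).take t).sum : ℝ) - t * (N * θ)| := by ring_nf
    _ ≤ t * (α * N) := hsum
    _ = α * (t * N) := by ring

theorem tIndex_spec_of_separated {J k N : ℕ} {nv : Fin J → ℕ} {θ α : ℝ} (hk : 1 ≤ k)
    (hkJ : k < J) (hN : 0 < N)
    (hsmall : ∀ j : Fin J, (j : ℕ) < k → |(nv j : ℝ) - N * θ| ≤ α * N)
    (hbig : ∀ j : Fin J, k ≤ (j : ℕ) → N * θ + 2 * α * N + lamOf nv < nv j) :
    (1 ≤ tIndex J N nv ∧ tIndex J N nv ≤ k) ∧ |thetaHat N nv (tIndex J N nv) - θ| ≤ α := by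
  have hαN : 0 ≤ α * N := (abs_nonneg _).trans (hsmall ⟨0, by omega⟩ hk)
  have hlam : 0 ≤ lamOf nv := Real.sqrt_nonneg _
  have hsep : ∀ i j : Fin J, (i : ℕ) < k → k ≤ (j : ℕ) → nv i ≤ nv j := fun i j hi hj => by
    have := (abs_le.1 (hsmall i hi)).2
    exact_mod_cast (show (nv i : ℝ) ≤ nv j by linarith [hbig j hj])
  have hthetaHat : ∀ t, 1 ≤ t → t ≤ k → |thetaHat N nv t - θ| ≤ α := fun t ht htk =>
    abs_thetaHat_sub_le hN ht (by omega) fun x hx => by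
      obtain ⟨i, hi, rfl⟩ := exists_eq_of_mem_take_sortedCounts hsep hkJ.le htk hx
      exact hsmall i hi
  have hk_mem : k ∈ {t | 1 ≤ t ∧ t < J ∧
      (N : ℝ) * thetaHat N nv t + lamOf nv < (((sortedCounts nv).getD t 0 : ℕ) : ℝ)} := by
    refine ⟨hk, hkJ, ?_⟩
    obtain ⟨j, hj, hjk⟩ := exists_eq_sortedCounts_getD hsep hkJ
    have := mul_le_mul_of_nonneg_left (abs_le.1 (hthetaHat k hk le_rfl)).2 (Nat.cast_nonneg N)
    rw [← hjk]
    linarith [hbig j hj]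
  have htk : tIndex J N nv ≤ k := Nat.sInf_le hk_mem
  have ht : 1 ≤ tIndex J N nv := (Nat.sInf_mem ⟨k, hk_mem⟩).1
  exact ⟨⟨ht, htk⟩, hthetaHat _ ht htk⟩

theorem lamOf_le {J : ℕ} {nv : Fin J → ℕ} {c : ℝ} (hc : 0 ≤ c) (h : ∀ j, (nv j : ℝ) ≤ c ^ 2) :
    lamOf nv ≤ c := by
  have hsup : ((Finset.univ.sup nv : ℕ) : ℝ) ≤ c ^ 2 :=
    Finset.sup_induction (p := fun m : ℕ => (m : ℝ) ≤ c ^ 2) (by simpa using sq_nonneg c)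
      (fun a ha b hb => by simpa [Nat.cast_max] using And.intro ha hb) (fun j _ => h j)
  exact (Real.sqrt_le_sqrt hsup).trans_eq (Real.sqrt_sq hc)

theorem hasSum_poissonMeasure_mul_exp (r : ℝ≥0) (t : ℝ) :
    HasSum (fun n : ℕ => exp (-r) * r ^ n / n.factorial * exp (t * n))
      (exp (r * (exp t - 1))) := by
  have h := (NormedSpace.expSeries_div_hasSum_exp ((r : ℝ) * exp t)).mul_left (exp (-r))
  rw [← Real.exp_eq_exp_ℝ, ← Real.exp_add, show -(r : ℝ) + r * exp t = r * (exp t - 1) by ring]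
    at h
  convert! h using 1
  ext n
  rw [mul_pow, ← Real.exp_nat_mul, mul_comm (n : ℝ) t]
  ring

theorem integrable_exp_mul_poissonMeasure (r : ℝ≥0) (t : ℝ) :
    Integrable (fun n : ℕ => exp (t * n)) (poissonMeasure r) := by
  refine integrable_poissonMeasure_iff.2 ?_
  simpa only [Real.norm_eq_abs, abs_of_pos (Real.exp_pos _)]
    using (hasSum_poissonMeasure_mul_exp r t).summable

theorem mgf_poissonMeasure (r : ℝ≥0) (t : ℝ) :
    mgf (fun n : ℕ => (n : ℝ)) (poissonMeasure r) t = exp (r * (exp t - 1)) := by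
  rw [mgf, integral_poissonMeasure]
  exact (hasSum_poissonMeasure_mul_exp r t).tsum_eq

/-- Chernoff bounds for both tails, at the tilts `s` and `-s`. -/
theorem poissonMeasure_real_le_abs_sub_le (r : ℝ≥0) (a : ℝ) {s : ℝ} (hs₀ : 0 ≤ s) (hs₁ : s ≤ 1) :
    (poissonMeasure r).real {n | a ≤ |(n : ℝ) - r|} ≤ 2 * exp (r * s ^ 2 - s * a) := by
  have hexp : ∀ u : ℝ, |u| ≤ 1 → exp u - 1 - u ≤ u ^ 2 := fun u hu =>
    (le_abs_self _).trans (Real.abs_exp_sub_one_sub_id_le hu)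
  have hupper := measure_ge_le_exp_mul_mgf (X := fun n : ℕ => (n : ℝ)) (μ := poissonMeasure r)
    (r + a) hs₀ (integrable_exp_mul_poissonMeasure r s)
  have hlower := measure_le_le_exp_mul_mgf (X := fun n : ℕ => (n : ℝ)) (μ := poissonMeasure r)
    (r - a) (neg_nonpos.2 hs₀) (integrable_exp_mul_poissonMeasure r (-s))
  rw [mgf_poissonMeasure, ← Real.exp_add] at hupper hlower
  have hsub : {n : ℕ | a ≤ |(n : ℝ) - r|} ⊆ {n | (r : ℝ) + a ≤ n} ∪ {n | (n : ℝ) ≤ r - a} := by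
    intro n (hn : a ≤ _)
    rcases le_abs'.1 hn with h | h
    · exact Or.inr (show (n : ℝ) ≤ r - a by linarith)
    · exact Or.inl (show (r : ℝ) + a ≤ n by linarith)
  have hr : (0 : ℝ) ≤ r := r.2
  calc _ ≤ (poissonMeasure r).real {n | (r : ℝ) + a ≤ n}
        + (poissonMeasure r).real {n | (n : ℝ) ≤ r - a} :=
        (measureReal_mono hsub).trans (measureReal_union_le _ _)
    _ ≤ exp (r * s ^ 2 - s * a) + exp (r * s ^ 2 - s * a) := by
      gcongr
      · refine hupper.trans (Real.exp_le_exp.2 ?_)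
        nlinarith [hexp s (by rw [abs_of_nonneg hs₀]; exact hs₁)]
      · refine hlower.trans (Real.exp_le_exp.2 ?_)
        nlinarith [hexp (-s) (by rw [abs_neg, abs_of_nonneg hs₀]; exact hs₁)]
    _ = 2 * exp (r * s ^ 2 - s * a) := by ring

theorem tendsto_poissonMeasure_real_le_abs_sub (μ : ℝ≥0) {α : ℝ} (hα : 0 < α) :
    Tendsto (fun N : ℕ => (poissonMeasure (N * μ)).real {n | α * N ≤ |(n : ℝ) - N * μ|})
      atTop (𝓝 0) := by
  -- any `s ∈ (0, 1]` with `μ s < α` makes the Chernoff exponent `N (μ s² - s α)` negative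
  set s := α / (2 * (μ + α))
  have hμ : (0 : ℝ) ≤ μ := μ.2
  have hs₀ : 0 < s := by positivity
  have hs₁ : s ≤ 1 := by
    rw [div_le_one (by positivity)]; linarith
  have hμs : μ * s < α := by
    rw [mul_div_assoc', div_lt_iff₀ (by positivity)]
    nlinarith
  have hc : μ * s ^ 2 - s * α < 0 := by nlinarith
  have hbound : ∀ N : ℕ, (poissonMeasure (N * μ)).real {n | α * N ≤ |(n : ℝ) - N * μ|}
      ≤ 2 * exp (N * (μ * s ^ 2 - s * α)) := fun N => by
    convert poissonMeasure_real_le_abs_sub_le (N * μ) (α * N) hs₀.le hs₁ using 3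
    · push_cast; rfl
    · push_cast; ring
  refine squeeze_zero (fun N => measureReal_nonneg) hbound ?_
  simpa using (Real.tendsto_exp_atBot.comp
    ((tendsto_natCast_atTop_atTop (R := ℝ)).atTop_mul_const_of_neg hc)).const_mul 2

theorem measureReal_pi_exists_mem_le {ι : Type*} [Fintype ι] {α : ι → Type*}
    [∀ i, MeasurableSpace (α i)] (μ : ∀ i, Measure (α i)) [∀ i, IsProbabilityMeasure (μ i)]
    {s : ∀ i, Set (α i)} (hs : ∀ i, MeasurableSet (s i)) :
    (Measure.pi μ).real {x | ∃ i, x i ∈ s i} ≤ ∑ i, (μ i).real (s i) := by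
  have hunion : {x : ∀ i, α i | ∃ i, x i ∈ s i} = ⋃ i, Function.eval i ⁻¹' s i := by
    ext x; simp
  rw [hunion]
  refine (measureReal_iUnion_fintype_le _).trans (le_of_eq ?_)
  exact Finset.sum_congr rfl fun i _ =>
    (measurePreserving_eval μ i).measureReal_preimage (hs i).nullMeasurableSet

theorem tsum_ite_prod_poissonPMFReal {J : ℕ} (ρ : Fin J → ℝ≥0) (p : (Fin J → ℕ) → Prop)
    [DecidablePred p] :
    ∑' nv : Fin J → ℕ, (if p nv then ∏ j, poissonPMFReal (ρ j) (nv j) else 0)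
      = (Measure.pi fun j => poissonMeasure (ρ j)).real {nv | p nv} := by
  rw [measureReal_def, ← Measure.tsum_indicator_apply_singleton _ _ (MeasurableSet.of_discrete),
    ENNReal.tsum_toReal_eq]
  · refine tsum_congr fun nv => ?_
    by_cases h : p nv
    · rw [if_pos h, Set.indicator_of_mem (show nv ∈ {nv | p nv} from h), Measure.pi_singleton,
        ENNReal.toReal_prod]
      exact Finset.prod_congr rfl fun j _ => (poissonMeasure_real_singleton _ _).symm
    · rw [if_neg h, Set.indicator_of_notMem (show nv ∉ {nv | p nv} from h), ENNReal.toReal_zero]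
  · exact fun nv => ne_top_of_le_ne_top (measure_ne_top _ {nv}) (Set.indicator_le_self _ _ nv)

theorem tendsto_measureReal_pi_poissonMeasure_exists_le_abs_sub {J : ℕ} (μ : Fin J → ℝ≥0)
    {α : ℝ} (hα : 0 < α) :
    Tendsto (fun N : ℕ => (Measure.pi fun j => poissonMeasure (N * μ j)).real
      {nv | ∃ j, α * N ≤ |(nv j : ℝ) - N * μ j|}) atTop (𝓝 0) := by
  have hsum := tendsto_finset_sum (Finset.univ : Finset (Fin J))
    fun j _ => tendsto_poissonMeasure_real_le_abs_sub (μ j) hα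
  rw [Finset.sum_const_zero] at hsum
  exact squeeze_zero (fun N => measureReal_nonneg)
    (fun N => measureReal_pi_exists_mem_le _ (s := fun j => {n : ℕ | α * N ≤ |(n : ℝ) - N * μ j|})
      fun j => .of_discrete) hsum

section TwoStep

variable {J k : ℕ} {θ : ℝ≥0} {μ : Fin J → ℝ≥0} {α : ℝ}

theorem eventually_tIndex_spec (hk : 1 ≤ k) (hkJ : k < J)
    (hμ1 : ∀ j : Fin J, (j : ℕ) < k → μ j = θ) (hα : 0 < α)
    (hgap : ∀ j : Fin J, k ≤ (j : ℕ) → θ + 4 * α < μ j) :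
    ∀ᶠ N : ℕ in atTop, ∀ nv : Fin J → ℕ, (∀ j, |(nv j : ℝ) - N * μ j| < α * N) →
      (1 ≤ tIndex J N nv ∧ tIndex J N nv ≤ k) ∧ |thetaHat N nv (tIndex J N nv) - θ| ≤ α := by
  have hlarge : ∀ᶠ N : ℕ in atTop, ∀ j, (μ j : ℝ) + α ≤ α ^ 2 * N := eventually_all.2 fun j =>
    ((tendsto_natCast_atTop_atTop (R := ℝ)).const_mul_atTop (by positivity)).eventually_ge_atTop _
  filter_upwards [hlarge, eventually_gt_atTop 0] with N hlarge hN nv hdev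
  have hNR : (0 : ℝ) < N := Nat.cast_pos.2 hN
  have hlam : lamOf nv ≤ α * N := lamOf_le (by positivity) fun j => by
    have := (abs_lt.1 (hdev j)).2
    nlinarith [hlarge j]
  refine tIndex_spec_of_separated hk hkJ hN (fun j hj => ?_) (fun j hj => ?_)
  · simpa [hμ1 j hj] using (hdev j).le
  · have := (abs_lt.1 (hdev j)).1
    nlinarith [hgap j hj]

theorem tendsto_measureReal_of_not_tIndex_spec (hk : 1 ≤ k) (hkJ : k < J)
    (hμ1 : ∀ j : Fin J, (j : ℕ) < k → μ j = θ) (hα : 0 < α)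
    (hgap : ∀ j : Fin J, k ≤ (j : ℕ) → θ + 4 * α < μ j) {E : ℕ → Set (Fin J → ℕ)}
    (hE : ∀ N, ∀ nv ∈ E N,
      ¬((1 ≤ tIndex J N nv ∧ tIndex J N nv ≤ k) ∧ |thetaHat N nv (tIndex J N nv) - θ| ≤ α)) :
    Tendsto (fun N : ℕ => (Measure.pi fun j => poissonMeasure (N * μ j)).real (E N))
      atTop (𝓝 0) := by
  refine squeeze_zero' (.of_forall fun N => measureReal_nonneg) ?_
    (tendsto_measureReal_pi_poissonMeasure_exists_le_abs_sub μ hα)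
  filter_upwards [eventually_tIndex_spec hk hkJ hμ1 hα hgap] with N hN
  refine measureReal_mono fun nv hnv => ?_
  by_contra hclose
  simp only [Set.mem_setOf_eq, not_exists, not_le] at hclose
  exact hE N nv hnv (hN nv hclose)

end TwoStep

theorem two_step_estimator_consistent_general (J k : ℕ) (hk : 1 ≤ k) (hkJ : k < J)
    (θ : NNReal) (μ : Fin J → NNReal)
    (hμ1 : ∀ j : Fin J, (j : ℕ) < k → μ j = θ)
    (hμ2 : ∀ j : Fin J, k ≤ (j : ℕ) → θ < μ j) :
    Tendsto (fun N : ℕ =>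
        ∑' nv : Fin J → ℕ,
          if 1 ≤ tIndex J N nv ∧ tIndex J N nv ≤ k
          then ∏ j, poissonPMFReal (N * μ j) (nv j) else 0)
      atTop (nhds 1) ∧
    ∀ ε : ℝ, 0 < ε →
      Tendsto (fun N : ℕ =>
          ∑' nv : Fin J → ℕ,
            if 1 ≤ tIndex J N nv ∧ tIndex J N nv ≤ k ∧
                ε < |thetaHat N nv (tIndex J N nv) - (θ : ℝ)|
            then ∏ j, poissonPMFReal (N * μ j) (nv j) else 0)
        atTop (nhds 0) := by
  have hgap : ∀ᶠ α in 𝓝[>] (0 : ℝ), ∀ j : Fin J, k ≤ (j : ℕ) →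
      (θ : ℝ) + 4 * α < μ j := by
    refine eventually_all.2 fun j => eventually_imp_distrib_left.2 fun hj => ?_
    have hlim : Tendsto (fun α : ℝ => (θ : ℝ) + 4 * α) (𝓝[>] 0) (𝓝 θ) := by
      refine (Continuous.tendsto' (by fun_prop) 0 _ ?_).mono_left nhdsWithin_le_nhds
      simp
    exact hlim.eventually_lt_const (by exact_mod_cast hμ2 j hj)
  refine ⟨?_, fun ε hε => ?_⟩
  · obtain ⟨α, hgapα, hα⟩ := (hgap.and self_mem_nhdsWithin).exists
    have h := tendsto_measureReal_of_not_tIndex_spec hk hkJ hμ1 hα hgapα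
      (E := fun N => {nv | 1 ≤ tIndex J N nv ∧ tIndex J N nv ≤ k}ᶜ) fun N nv hnv hgood => hnv hgood.1
    have h1 := h.const_sub (1 : ℝ)
    rw [sub_zero] at h1
    refine h1.congr fun N => ?_
    rw [tsum_ite_prod_poissonPMFReal, probReal_compl_eq_one_sub .of_discrete, sub_sub_cancel]
  · obtain ⟨α, hgapα, hα⟩ := (hgap.and (Ioc_mem_nhdsGT hε)).exists
    refine (tendsto_measureReal_of_not_tIndex_spec hk hkJ hμ1 hα.1 hgapα
      fun N nv hnv hgood => ?_).congr fun N => (tsum_ite_prod_poissonPMFReal _ _).symm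
    exact lt_irrefl ε (hnv.2.2.trans_le (hgood.2.trans hα.2))

theorem two_step_estimator_consistent (J k : ℕ) (hk : 1 ≤ k) (hkJ : k < J)
    (θ : NNReal) (hθ : 0 < θ) (μ : Fin J → NNReal)
    (hμ1 : ∀ j : Fin J, (j : ℕ) < k → μ j = θ)
    (hμ2 : ∀ j : Fin J, k ≤ (j : ℕ) → θ < μ j) :
    Tendsto (fun N : ℕ =>
        ∑' nv : Fin J → ℕ,
          if 1 ≤ tIndex J N nv ∧ tIndex J N nv ≤ k
          then ∏ j, poissonPMFReal (N * μ j) (nv j) else 0)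
      atTop (nhds 1) ∧
    ∀ ε : ℝ, 0 < ε →
      Tendsto (fun N : ℕ =>
          ∑' nv : Fin J → ℕ,
            if 1 ≤ tIndex J N nv ∧ tIndex J N nv ≤ k ∧
                ε < |thetaHat N nv (tIndex J N nv) - (θ : ℝ)|
            then ∏ j, poissonPMFReal (N * μ j) (nv j) else 0)
        atTop (nhds 0) :=
  two_step_estimator_consistent_general J k hk hkJ θ μ hμ1 hμ2
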